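/- Let G, G' be graphs with distinguished vertex pairs (s,t) and (s',t'), and let D, D' be the corresponding digraphs obtained by directing every edge along a direction consistent with flow from s to t (respectively s' to t'). If every edge of G lies on an s–t path traversing it in a unique direction, then a bijection τ : V(G) → V(G') with τ(s)=s', τ(t)=t' is a graph isomorphism from G to G' if and only if it is a digraph isomorphism from D to D'. -/

import Mathlib

/-!
A graph isomorphism carries `s`–`t` paths to `s'`–`t'` paths, so every arc of `D`, lying on
such a path, is sent to a dart of an `s'`–`t'` path, which is an arc of `D'`. Conversely,
every edge of `G` carries an arc of `D` in one of its two directions, and arcs of `D'` are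
edges of `G'`.
-/

namespace SimpleGraph

variable {V V' : Type*} {G : SimpleGraph V} {G' : SimpleGraph V'}

theorem Iso.orientation_map {s t : V} {s' t' : V'} {D : V → V → Prop} {D' : V' → V' → Prop}
    (hcover : ∀ u v, D u v →
      ∃ p : G.Walk s t, p.IsPath ∧ ∃ d ∈ p.darts, d.fst = u ∧ d.snd = v)
    (hflow' : ∀ p : G'.Walk s' t', p.IsPath → ∀ d ∈ p.darts, D' d.fst d.snd)
    (f : G ≃g G') (hs : f s = s') (ht : f t = t') {u v : V} (huv : D u v) :
    D' (f u) (f v) := by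
  obtain ⟨p, hp, d, hd, rfl, rfl⟩ := hcover u v huv
  exact hflow' ((p.map f.toHom).copy hs ht)
    ((Walk.isPath_copy _ _ _).mpr (hp.map f.injective)) (f.toHom.mapDart d)
    (by simpa [Walk.darts_map] using List.mem_map_of_mem hd)

theorem orientation_total {D : V → V → Prop} (hdir : ∀ u v, G.Adj u v → (D u v ↔ ¬ D v u))
    (u v : V) (huv : G.Adj u v) : D u v ∨ D v u :=
  or_iff_not_imp_left.mpr fun hn => by_contra fun h => hn ((hdir u v huv).mpr h)

theorem adj_map_of_orientation_map {D : V → V → Prop} {D' : V' → V' → Prop}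
    (htotal : ∀ u v, G.Adj u v → D u v ∨ D v u) (hDG' : ∀ u v, D' u v → G'.Adj u v)
    (τ : V → V') (hτ : ∀ u v, D u v → D' (τ u) (τ v)) {u v : V} (huv : G.Adj u v) :
    G'.Adj (τ u) (τ v) := by
  rcases htotal u v huv with h | h
  · exact hDG' _ _ (hτ _ _ h)
  · exact (hDG' _ _ (hτ _ _ h)).symm

end SimpleGraph

open SimpleGraph in
/-- Let `G`, `G'` be graphs with terminal pairs `(s,t)`, `(s',t')`, and let `D`, `D'` be
the corresponding orientations directing every edge consistently with flow from the
source to the sink (every edge lies on an `s`–`t` path traversing it in a unique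
direction).  Then a bijection `τ` with `τ s = s'`, `τ t = t'` is a graph isomorphism
from `G` to `G'` iff it is a digraph isomorphism from `D` to `D'`. -/
theorem graph_iso_iff_digraph_iso {V V' : Type*}
    (G : SimpleGraph V) (G' : SimpleGraph V')
    (s t : V) (s' t' : V') (D : V → V → Prop) (D' : V' → V' → Prop)
    (hDG : ∀ u v, D u v → G.Adj u v)
    (hdir : ∀ u v, G.Adj u v → (D u v ↔ ¬ D v u))
    (hcover : ∀ u v, D u v →
      ∃ p : G.Walk s t, p.IsPath ∧ ∃ d ∈ p.darts, d.fst = u ∧ d.snd = v)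
    (hflow : ∀ p : G.Walk s t, p.IsPath → ∀ d ∈ p.darts, D d.fst d.snd)
    (hDG' : ∀ u v, D' u v → G'.Adj u v)
    (hdir' : ∀ u v, G'.Adj u v → (D' u v ↔ ¬ D' v u))
    (hcover' : ∀ u v, D' u v →
      ∃ p : G'.Walk s' t', p.IsPath ∧ ∃ d ∈ p.darts, d.fst = u ∧ d.snd = v)
    (hflow' : ∀ p : G'.Walk s' t', p.IsPath → ∀ d ∈ p.darts, D' d.fst d.snd)
    (τ : V ≃ V') (hτs : τ s = s') (hτt : τ t = t') :
    (∀ u v, G.Adj u v ↔ G'.Adj (τ u) (τ v)) ↔ (∀ u v, D u v ↔ D' (τ u) (τ v)) := by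
  constructor
  · intro h u v
    let f : G ≃g G' := ⟨τ, (h _ _).symm⟩
    refine ⟨f.orientation_map hcover hflow' hτs hτt, fun hD => ?_⟩
    simpa [f] using f.symm.orientation_map hcover' hflow
      (by simp [f, ← hτs]) (by simp [f, ← hτt]) hD
  · intro h u v
    refine ⟨adj_map_of_orientation_map (orientation_total hdir) hDG' τ (fun u v => (h u v).mp),
      fun hadj => ?_⟩
    simpa using adj_map_of_orientation_map (orientation_total hdir') hDG τ.symm
      (fun u' v' hD => (h _ _).mpr (by simpa using hD)) hadj
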